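/- arXiv:2004.12826 — 3 statements merged into one kernel-verified Lean document; each statement's English description precedes it below -/
import Mathlib

section
/- Let φ: [1,∞) → (0,∞) be C¹, strictly increasing, strictly concave, with φ(x) ≤ x for all x ≥ 1 and x ↦ φ(x)/x nonincreasing. With H_φ(u) = ∫₁ᵘ ds/φ(s) and H_φ⁻¹ its inverse, one has the submultiplicativity inequality H_φ⁻¹(s + t) ≤ H_φ⁻¹(s) · H_φ⁻¹(t) for all s, t ≥ 0. -/
/-! Write `f = 1 / φ`, so that `H_φ(u) = ∫₁ᵘ f`. Since `φ(x)/x` is nonincreasing, `x f(x)` is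
nondecreasing, i.e. `f(x) ≤ a f(a x)` for `a ≥ 1`; the substitution `x ↦ a x` then gives
`H_φ(b) ≤ ∫ₐ^{ab} f`, hence `H_φ(a) + H_φ(b) ≤ H_φ(ab)`. Applying the strictly increasing `H_φ`
to `H_φ⁻¹(s + t)` and `H_φ⁻¹(s) H_φ⁻¹(t)` gives the claim. -/

open MeasureTheory intervalIntegral Set

section

variable {f : ℝ → ℝ} {c : ℝ}

lemma ContinuousOn.intervalIntegrable_of_Ici (hf : ContinuousOn f (Ici c)) {u v : ℝ}
    (hu : c ≤ u) (hv : c ≤ v) : IntervalIntegrable f volume u v :=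
  (hf.mono fun _ hx ↦ le_trans (le_min hu hv) hx.1).intervalIntegrable

lemma strictMonoOn_integral_of_pos (hf : ContinuousOn f (Ici c)) (hpos : ∀ x ≥ c, 0 < f x) :
    StrictMonoOn (fun u ↦ ∫ x in c..u, f x) (Ici c) := by
  intro u hu v hv huv
  have hgap : 0 < ∫ x in u..v, f x :=
    intervalIntegral_pos_of_pos_on (hf.intervalIntegrable_of_Ici hu hv)
      (fun x hx ↦ hpos x (le_trans hu hx.1.le)) huv
  show ∫ x in c..u, f x < ∫ x in c..v, f x
  rw [← integral_add_adjacent_intervals (hf.intervalIntegrable_of_Ici le_rfl hu)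
    (hf.intervalIntegrable_of_Ici hu hv)]
  linarith

lemma integral_le_integral_comp_mul (hf : ContinuousOn f (Ici 1))
    (hmono : MonotoneOn (fun x ↦ x * f x) (Ici 1)) {a b : ℝ} (ha : 1 ≤ a) (hb : 1 ≤ b) :
    ∫ x in (1:ℝ)..b, f x ≤ ∫ x in a..a * b, f x := by
  have hpoint : ∀ x ∈ Icc 1 b, f x ≤ a * f (a * x) := fun x hx ↦ by
    have hx0 : 0 < x := zero_lt_one.trans_le hx.1
    have hax : x ≤ a * x := le_mul_of_one_le_left hx0.le ha
    have h : x * f x ≤ a * x * f (a * x) := hmono hx.1 (le_trans hx.1 hax) hax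
    exact le_of_mul_le_mul_left (by linarith : x * f x ≤ x * (a * f (a * x))) hx0
  have hcomp : IntervalIntegrable (fun x ↦ a * f (a * x)) volume 1 b := by
    refine ContinuousOn.intervalIntegrable_of_Icc hb (continuousOn_const.mul ?_)
    refine (hf.comp (continuousOn_const.mul continuousOn_id) ?_)
    exact fun x hx ↦ one_le_mul_of_one_le_of_one_le ha hx.1
  calc ∫ x in (1:ℝ)..b, f x
      ≤ ∫ x in (1:ℝ)..b, a * f (a * x) :=
        integral_mono_on hb (hf.intervalIntegrable_of_Ici le_rfl hb) hcomp hpoint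
    _ = ∫ x in a..a * b, f x := by
        rw [intervalIntegral.integral_const_mul, ← smul_eq_mul, smul_integral_comp_mul_left,
          mul_one]

lemma integral_add_integral_le_integral_mul (hf : ContinuousOn f (Ici 1))
    (hmono : MonotoneOn (fun x ↦ x * f x) (Ici 1)) {a b : ℝ} (ha : 1 ≤ a) (hb : 1 ≤ b) :
    (∫ x in (1:ℝ)..a, f x) + ∫ x in (1:ℝ)..b, f x ≤ ∫ x in (1:ℝ)..a * b, f x := by
  rw [← integral_add_adjacent_intervals (hf.intervalIntegrable_of_Ici le_rfl ha)
    (hf.intervalIntegrable_of_Ici ha (one_le_mul_of_one_le_of_one_le ha hb))]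
  gcongr
  exact integral_le_integral_comp_mul hf hmono ha hb

end

theorem stmt_1_general (φ Hinv : ℝ → ℝ)
    (hC1 : ContDiffOn ℝ 1 φ (Set.Ici 1))
    (hpos : ∀ x ≥ (1:ℝ), 0 < φ x)
    (hratio : ∀ x y : ℝ, 1 ≤ x → x ≤ y → φ y / y ≤ φ x / x)
    (hinv_ge : ∀ t ≥ (0:ℝ), 1 ≤ Hinv t)
    (hinv_right : ∀ t ≥ (0:ℝ), (∫ s in (1:ℝ)..(Hinv t), 1 / φ s) = t) :
    ∀ s t : ℝ, 0 ≤ s → 0 ≤ t → Hinv (s + t) ≤ Hinv s * Hinv t := by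
  intro s t hs ht
  have ha := hinv_ge s hs
  have hb := hinv_ge t ht
  have hst := add_nonneg hs ht
  have hf : ContinuousOn (fun x ↦ 1 / φ x) (Ici 1) :=
    continuousOn_const.div hC1.continuousOn fun x hx ↦ (hpos x hx).ne'
  have hmono : MonotoneOn (fun x ↦ x * (1 / φ x)) (Ici 1) := fun x hx y hy hxy ↦ by
    show x * (1 / φ x) ≤ y * (1 / φ y)
    rw [mul_one_div, mul_one_div, ← one_div_div (φ x), ← one_div_div (φ y)]
    exact one_div_le_one_div_of_le (div_pos (hpos y hy) (zero_lt_one.trans_le hy))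
      (hratio x y hx hxy)
  have hsuper := integral_add_integral_le_integral_mul hf hmono ha hb
  rw [hinv_right s hs, hinv_right t ht, ← hinv_right (s + t) hst] at hsuper
  have hH := strictMonoOn_integral_of_pos hf fun x hx ↦ one_div_pos.mpr (hpos x hx)
  exact (hH.le_iff_le (hinv_ge _ hst) (one_le_mul_of_one_le_of_one_le ha hb)).mp hsuper

theorem stmt_1 (φ Hinv : ℝ → ℝ)
    (hC1 : ContDiffOn ℝ 1 φ (Set.Ici 1))
    (hmono : StrictMonoOn φ (Set.Ici 1))
    (hconc : StrictConcaveOn ℝ (Set.Ici 1) φ)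
    (hpos : ∀ x ≥ (1:ℝ), 0 < φ x)
    (hle : ∀ x ≥ (1:ℝ), φ x ≤ x)
    (hratio : ∀ x y : ℝ, 1 ≤ x → x ≤ y → φ y / y ≤ φ x / x)
    (hinv_ge : ∀ t ≥ (0:ℝ), 1 ≤ Hinv t)
    (hinv_left : ∀ u ≥ (1:ℝ), Hinv (∫ s in (1:ℝ)..u, 1 / φ s) = u)
    (hinv_right : ∀ t ≥ (0:ℝ), (∫ s in (1:ℝ)..(Hinv t), 1 / φ s) = t) :
    ∀ s t : ℝ, 0 ≤ s → 0 ≤ t → Hinv (s + t) ≤ Hinv s * Hinv t :=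
  stmt_1_general φ Hinv hC1 hpos hratio hinv_ge hinv_right
end

section
/- Let φ: [1,∞) → (0,∞) be C¹, strictly increasing, strictly concave, with φ(x) ≤ x for all x ≥ 1, and such that φ(x)/x → 0 as x → ∞. Let H_φ⁻¹ be the inverse of H_φ(u) = ∫₁ᵘ ds/φ(s). Then (1/s)·log(H_φ⁻¹(s)) → 0 as s → ∞; consequently, setting r_*(s) = φ(H_φ⁻¹(s)), one has (1/s)·log(r_*(s)) → 0 as s → ∞ (the rate function r_* is subexponential). -/
/-! If `φ x ≤ ε x` for `x ≥ M`, then `∫ s in M..u, 1 / φ s ≥ ε⁻¹ log (u / M)`, so `log u ≤ ε H_φ(u) + log M`.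
Taking `u = H_φ⁻¹(s)` gives `log H_φ⁻¹(s) ≤ ε s + log M` for every `ε > 0`, hence `log H_φ⁻¹(s) = o(s)`.
Since `φ 1 ≤ φ (H_φ⁻¹ s) ≤ H_φ⁻¹ s`, the same holds for `log r_*(s)`. -/

open Filter Set intervalIntegral Topology

lemma intervalIntegrable_one_div_of_monotoneOn {φ : ℝ → ℝ} {a b c : ℝ}
    (hmono : MonotoneOn φ (Ici a)) (hpos : ∀ x ≥ a, 0 < φ x) (hb : a ≤ b) (hc : a ≤ c) :
    IntervalIntegrable (fun s => 1 / φ s) MeasureTheory.volume b c := by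
  have hsub : uIcc b c ⊆ Ici a := fun x hx => (le_min hb hc).trans hx.1
  exact AntitoneOn.intervalIntegrable fun x hx y hy hxy =>
    one_div_le_one_div_of_le (hpos x (hsub hx)) (hmono (hsub hx) (hsub hy) hxy)

lemma log_div_le_mul_integral_one_div {φ : ℝ → ℝ} {ε M u : ℝ} (hM : 0 < M) (hMu : M ≤ u)
    (hpos : ∀ x ∈ Icc M u, 0 < φ x) (hφ : ∀ x ∈ Icc M u, φ x ≤ ε * x)
    (hint : IntervalIntegrable (fun s => 1 / φ s) MeasureTheory.volume M u) :
    Real.log (u / M) ≤ ε * ∫ s in M..u, 1 / φ s := by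
  have hx_pos : ∀ x ∈ Icc M u, 0 < x := fun x hx => hM.trans_le hx.1
  rw [← integral_one_div_of_pos hM (hM.trans_le hMu), ← intervalIntegral.integral_const_mul]
  refine integral_mono_on hMu ?_ (hint.const_mul ε) fun x hx => ?_
  · refine intervalIntegrable_one_div (fun x hx => ?_) continuousOn_id
    exact (hx_pos x (by rwa [uIcc_of_le hMu] at hx)).ne'
  · rw [mul_one_div, div_le_div_iff₀ (hx_pos x hx) (hpos x hx), one_mul]
    exact hφ x hx

lemma log_le_mul_integral_one_div_add_log {φ : ℝ → ℝ} {ε M u : ℝ}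
    (hmono : MonotoneOn φ (Ici 1)) (hpos : ∀ x ≥ 1, 0 < φ x) (hε : 0 < ε) (hM : 1 ≤ M)
    (hφ : ∀ x ≥ M, φ x ≤ ε * x) (hu : 1 ≤ u) :
    Real.log u ≤ ε * (∫ s in (1:ℝ)..u, 1 / φ s) + Real.log M := by
  have hint_nonneg : ∀ v ≥ (1:ℝ), 0 ≤ ∫ s in (1:ℝ)..v, 1 / φ s := fun v hv =>
    integral_nonneg hv fun s hs => (one_div_pos.2 (hpos s hs.1)).le
  rcases le_total u M with huM | hMu
  · have := mul_nonneg hε.le (hint_nonneg u hu)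
    linarith [Real.log_le_log (by linarith) huM]
  · have hsplit := integral_add_adjacent_intervals
      (intervalIntegrable_one_div_of_monotoneOn hmono hpos le_rfl hM)
      (intervalIntegrable_one_div_of_monotoneOn hmono hpos hM (hM.trans hMu))
    have htail := log_div_le_mul_integral_one_div (by linarith) hMu
      (fun x hx => hpos x (hM.trans hx.1)) (fun x hx => hφ x hx.1)
      (intervalIntegrable_one_div_of_monotoneOn hmono hpos hM (hM.trans hMu))
    rw [Real.log_div (by linarith) (by linarith)] at htail
    have := mul_nonneg hε.le (hint_nonneg M hM)
    rw [← hsplit, mul_add]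
    linarith

lemma tendsto_div_atTop_zero_of_le_mul_add {f : ℝ → ℝ} (hf : ∀ᶠ s in atTop, 0 ≤ f s)
    (hbound : ∀ ε > 0, ∃ C, ∀ᶠ s in atTop, f s ≤ ε * s + C) :
    Tendsto (fun s => f s / s) atTop (𝓝 0) := by
  refine tendsto_order.2 ⟨fun a ha => ?_, fun a ha => ?_⟩
  · filter_upwards [hf, eventually_gt_atTop 0] with s hfs hs
    exact ha.trans_le (div_nonneg hfs hs.le)
  · obtain ⟨C, hC⟩ := hbound (a / 2) (half_pos ha)
    filter_upwards [hC, eventually_gt_atTop 0, eventually_gt_atTop (2 * C / a)] with s hCs hs hsC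
    rw [div_lt_iff₀ hs]
    rw [div_lt_iff₀ ha] at hsC
    linarith

theorem stmt_4_general (φ Hinv : ℝ → ℝ)
    (hmono : StrictMonoOn φ (Set.Ici 1))
    (hpos : ∀ x ≥ (1:ℝ), 0 < φ x)
    (hle : ∀ x ≥ (1:ℝ), φ x ≤ x)
    (hlim : Tendsto (fun x => φ x / x) atTop (nhds 0))
    (hinv_ge : ∀ t ≥ (0:ℝ), 1 ≤ Hinv t)
    (hinv_right : ∀ t ≥ (0:ℝ), (∫ s in (1:ℝ)..(Hinv t), 1 / φ s) = t) :
    Tendsto (fun s => Real.log (Hinv s) / s) atTop (nhds 0)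
      ∧ Tendsto (fun s => Real.log (φ (Hinv s)) / s) atTop (nhds 0) := by
  have hlogHinv : Tendsto (fun s => Real.log (Hinv s) / s) atTop (𝓝 0) := by
    refine tendsto_div_atTop_zero_of_le_mul_add ?_ fun ε hε => ?_
    · filter_upwards [eventually_ge_atTop 0] with t ht using Real.log_nonneg (hinv_ge t ht)
    obtain ⟨M, hM⟩ := eventually_atTop.1
      ((hlim.eventually_lt_const hε).and (eventually_ge_atTop 1))
    have hφM : ∀ x ≥ M, φ x ≤ ε * x := fun x hx =>
      ((div_lt_iff₀ (by linarith [(hM x hx).2])).1 (hM x hx).1).le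
    refine ⟨Real.log M, ?_⟩
    filter_upwards [eventually_ge_atTop 0] with t ht
    simpa only [hinv_right t ht] using
      log_le_mul_integral_one_div_add_log hmono.monotoneOn hpos hε (hM M le_rfl).2 hφM
        (hinv_ge t ht)
  have hlower : Tendsto (fun s => Real.log (φ 1) / s) atTop (𝓝 0) :=
    tendsto_const_nhds.div_atTop tendsto_id
  refine ⟨hlogHinv, tendsto_of_tendsto_of_tendsto_of_le_of_le' hlower hlogHinv ?_ ?_⟩
  all_goals
    filter_upwards [eventually_gt_atTop 0] with s hs
    have hHinv := hinv_ge s hs.le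
    refine div_le_div_of_nonneg_right (Real.log_le_log ?_ ?_) hs.le
  · exact hpos 1 le_rfl
  · exact hmono.monotoneOn self_mem_Ici hHinv hHinv
  · exact hpos _ hHinv
  · exact hle _ hHinv

theorem stmt_4 (φ Hinv : ℝ → ℝ)
    (hC1 : ContDiffOn ℝ 1 φ (Set.Ici 1))
    (hmono : StrictMonoOn φ (Set.Ici 1))
    (hconc : StrictConcaveOn ℝ (Set.Ici 1) φ)
    (hpos : ∀ x ≥ (1:ℝ), 0 < φ x)
    (hle : ∀ x ≥ (1:ℝ), φ x ≤ x)
    (hlim : Tendsto (fun x => φ x / x) atTop (nhds 0))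
    (hinv_ge : ∀ t ≥ (0:ℝ), 1 ≤ Hinv t)
    (hinv_left : ∀ u ≥ (1:ℝ), Hinv (∫ s in (1:ℝ)..u, 1 / φ s) = u)
    (hinv_right : ∀ t ≥ (0:ℝ), (∫ s in (1:ℝ)..(Hinv t), 1 / φ s) = t) :
    Tendsto (fun s => Real.log (Hinv s) / s) atTop (nhds 0)
      ∧ Tendsto (fun s => Real.log (φ (Hinv s)) / s) atTop (nhds 0) :=
  stmt_4_general φ Hinv hmono hpos hle hlim hinv_ge hinv_right
end

section
/- Let φ: [1,∞) → (0,∞) be C¹, strictly increasing, strictly concave, with φ(x) ≤ x and φ(x)/x nonincreasing. Then for all s, t ≥ 0: φ(H_φ⁻¹(s + t)) ≤ H_φ⁻¹(t) · φ(H_φ⁻¹(s)). In other words, (H_φ⁻¹)'(s+t) ≤ H_φ⁻¹(t) · (H_φ⁻¹)'(s). -/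
/-!
Write `H u = ∫₁ᵘ 1/φ` and `a = H⁻¹ s`, `b = H⁻¹ t`. Since `φ(κx) ≤ κφ(x)` for `κ ≥ 1`, the
substitution `x = a v` gives `∫ₐ^{ab} 1/φ = a ∫₁ᵇ 1/φ(a v) dv ≥ ∫₁ᵇ 1/φ = t`, so `H(ab) ≥ s + t`
and, `H` being increasing, `H⁻¹(s + t) ≤ ab`. Monotonicity of `φ` and once more
`φ(ba) ≤ b φ(a)` give the claim.
-/

open MeasureTheory intervalIntegral Set

theorem map_mul_le_mul_map_of_div_antitone {φ : ℝ → ℝ}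
    (hratio : ∀ x y : ℝ, 1 ≤ x → x ≤ y → φ y / y ≤ φ x / x)
    {κ x : ℝ} (hκ : 1 ≤ κ) (hx : 1 ≤ x) : φ (κ * x) ≤ κ * φ x := by
  have hx0 : 0 < x := by linarith
  have h := hratio x (κ * x) hx (le_mul_of_one_le_left hx0.le hκ)
  rw [div_le_div_iff₀ (by positivity) hx0] at h
  exact le_of_mul_le_mul_right (by linear_combination h) hx0

theorem IntervalIntegrable.of_antitoneOn_Ici {f : ℝ → ℝ} {c u v : ℝ}
    (hf : AntitoneOn f (Ici c)) (hu : c ≤ u) (hv : c ≤ v) : IntervalIntegrable f volume u v :=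
  (hf.mono fun _ hx => (le_min hu hv).trans hx.1).intervalIntegrable

section

variable {φ : ℝ → ℝ} (hmono : MonotoneOn φ (Ici 1)) (hpos : ∀ x ≥ (1:ℝ), 0 < φ x)
include hmono hpos

theorem antitoneOn_one_div_of_monotoneOn : AntitoneOn (fun x => 1 / φ x) (Ici 1) :=
  fun x hx _ hy hxy => one_div_le_one_div_of_le (hpos x hx) (hmono hx hy hxy)

theorem strictMonoOn_integral_one_div :
    StrictMonoOn (fun u => ∫ x in (1:ℝ)..u, 1 / φ x) (Ici 1) := by
  intro u hu v hv huv
  have hanti := antitoneOn_one_div_of_monotoneOn hmono hpos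
  have hint : IntervalIntegrable (fun x => 1 / φ x) volume u v :=
    .of_antitoneOn_Ici hanti hu hv
  have hgap : 0 < ∫ x in u..v, 1 / φ x :=
    intervalIntegral_pos_of_pos_on hint (fun x hx => one_div_pos.2 (hpos x (hu.trans hx.1.le))) huv
  dsimp only
  rw [← integral_add_adjacent_intervals (.of_antitoneOn_Ici hanti le_rfl hu) hint]
  linarith

theorem integral_one_div_add_le_integral_mul
    (hratio : ∀ x y : ℝ, 1 ≤ x → x ≤ y → φ y / y ≤ φ x / x)
    {a b : ℝ} (ha : 1 ≤ a) (hb : 1 ≤ b) :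
    (∫ x in (1:ℝ)..a, 1 / φ x) + ∫ x in (1:ℝ)..b, 1 / φ x ≤ ∫ x in (1:ℝ)..(a * b), 1 / φ x := by
  have hanti := antitoneOn_one_div_of_monotoneOn hmono hpos
  have hscale : ∀ v ≥ (1:ℝ), 1 ≤ a * v := fun v hv => one_le_mul_of_one_le_of_one_le ha hv
  have hanti_scaled : AntitoneOn (fun v => a * (1 / φ (a * v))) (Ici 1) :=
    fun x hx y hy hxy => mul_le_mul_of_nonneg_left
      (hanti (hscale x hx) (hscale y hy) (mul_le_mul_of_nonneg_left hxy (by linarith))) (by linarith)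
  have hcmp : ∫ x in (1:ℝ)..b, 1 / φ x ≤ ∫ x in a..(a * b), 1 / φ x :=
    calc ∫ x in (1:ℝ)..b, 1 / φ x ≤ ∫ v in (1:ℝ)..b, a * (1 / φ (a * v)) := by
          refine integral_mono_on hb (.of_antitoneOn_Ici hanti le_rfl hb)
            (.of_antitoneOn_Ici hanti_scaled le_rfl hb) fun v hv => ?_
          rw [mul_one_div, div_le_div_iff₀ (hpos v hv.1) (hpos _ (hscale v hv.1)), one_mul]
          exact map_mul_le_mul_map_of_div_antitone hratio ha hv.1
      _ = ∫ x in a..(a * b), 1 / φ x := by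
          rw [intervalIntegral.integral_const_mul, integral_comp_mul_left (fun x => 1 / φ x) (by linarith), mul_one,
            smul_eq_mul, ← mul_assoc, mul_inv_cancel₀ (by linarith), one_mul]
  rw [← integral_add_adjacent_intervals (.of_antitoneOn_Ici hanti le_rfl ha)
    (.of_antitoneOn_Ici hanti ha (hscale b hb))]
  linarith

theorem rightInverse_integral_add_le_mul
    (hratio : ∀ x y : ℝ, 1 ≤ x → x ≤ y → φ y / y ≤ φ x / x) {Hinv : ℝ → ℝ}
    (hinv_ge : ∀ t ≥ (0:ℝ), 1 ≤ Hinv t)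
    (hinv_right : ∀ t ≥ (0:ℝ), (∫ s in (1:ℝ)..(Hinv t), 1 / φ s) = t)
    {s t : ℝ} (hs : 0 ≤ s) (ht : 0 ≤ t) : Hinv (s + t) ≤ Hinv s * Hinv t := by
  have hst := add_nonneg hs ht
  refine ((strictMonoOn_integral_one_div hmono hpos).le_iff_le (hinv_ge _ hst)
    (one_le_mul_of_one_le_of_one_le (hinv_ge s hs) (hinv_ge t ht))).1 ?_
  calc ∫ x in (1:ℝ)..Hinv (s + t), 1 / φ x = (∫ x in (1:ℝ)..Hinv s, 1 / φ x)
        + ∫ x in (1:ℝ)..Hinv t, 1 / φ x := by rw [hinv_right _ hst, hinv_right s hs, hinv_right t ht]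
    _ ≤ _ := integral_one_div_add_le_integral_mul hmono hpos hratio (hinv_ge s hs) (hinv_ge t ht)

end

theorem stmt_6_general (φ Hinv : ℝ → ℝ)
    (hmono : StrictMonoOn φ (Set.Ici 1))
    (hpos : ∀ x ≥ (1:ℝ), 0 < φ x)
    (hratio : ∀ x y : ℝ, 1 ≤ x → x ≤ y → φ y / y ≤ φ x / x)
    (hinv_ge : ∀ t ≥ (0:ℝ), 1 ≤ Hinv t)
    (hinv_right : ∀ t ≥ (0:ℝ), (∫ s in (1:ℝ)..(Hinv t), 1 / φ s) = t) :
    ∀ s t : ℝ, 0 ≤ s → 0 ≤ t → φ (Hinv (s + t)) ≤ Hinv t * φ (Hinv s) := by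
  intro s t hs ht
  have ha := hinv_ge s hs
  have hb := hinv_ge t ht
  have hsub : Hinv (s + t) ≤ Hinv t * Hinv s := by
    rw [mul_comm]
    exact rightInverse_integral_add_le_mul hmono.monotoneOn hpos hratio hinv_ge hinv_right hs ht
  calc φ (Hinv (s + t)) ≤ φ (Hinv t * Hinv s) :=
        hmono.monotoneOn (hinv_ge _ (add_nonneg hs ht)) (one_le_mul_of_one_le_of_one_le hb ha) hsub
    _ ≤ Hinv t * φ (Hinv s) := map_mul_le_mul_map_of_div_antitone hratio hb ha

theorem stmt_6 (φ Hinv : ℝ → ℝ)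
    (hC1 : ContDiffOn ℝ 1 φ (Set.Ici 1))
    (hmono : StrictMonoOn φ (Set.Ici 1))
    (hconc : StrictConcaveOn ℝ (Set.Ici 1) φ)
    (hpos : ∀ x ≥ (1:ℝ), 0 < φ x)
    (hle : ∀ x ≥ (1:ℝ), φ x ≤ x)
    (hratio : ∀ x y : ℝ, 1 ≤ x → x ≤ y → φ y / y ≤ φ x / x)
    (hinv_ge : ∀ t ≥ (0:ℝ), 1 ≤ Hinv t)
    (hinv_left : ∀ u ≥ (1:ℝ), Hinv (∫ s in (1:ℝ)..u, 1 / φ s) = u)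
    (hinv_right : ∀ t ≥ (0:ℝ), (∫ s in (1:ℝ)..(Hinv t), 1 / φ s) = t) :
    ∀ s t : ℝ, 0 ≤ s → 0 ≤ t → φ (Hinv (s + t)) ≤ Hinv t * φ (Hinv s) :=
  stmt_6_general φ Hinv hmono hpos hratio hinv_ge hinv_right
end
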